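/- Let k be a natural number and let R be an ℕ^k-graded ring with grading 𝒜 : (Fin k → ℕ) → AddSubgroup R. Assume R is semi-commutative: for all a, b ∈ R, a * b = 0 implies a * r * b = 0 for every r ∈ R. Let (f_i)_{i ∈ I} be a family of elements of R and suppose there exists a non-zero g ∈ R with f_i * g = 0 for all i ∈ I. Then there exist v ∈ Fin k → ℕ and a non-zero homogeneous element h ∈ 𝒜 v such that f_i * h = 0 for all i ∈ I. -/

import Mathlib

/-!
McCoy's argument, for a grading by a linearly ordered cancellative monoid such as `ℕ^k` with
the lexicographic order. Among the non-zero common right annihilators pick `g` with the fewest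
homogeneous components, and let `g_v` be its top component. If some component `(f i)_w` does not
kill `g`, take `w` maximal with this property: comparing degree `w + v` components in
`f i * g = 0` gives `(f i)_w * g_v = 0`, so by semi-commutativity `(f i)_w * g` is a non-zero
common annihilator with fewer components, a contradiction. Hence every `(f i)_w` kills `g`, and
then also `g_v`.
-/

namespace DirectSum

variable {ι R σ : Type*} [DecidableEq ι] [Semiring R] [SetLike σ R] [AddSubmonoidClass σ R]
  (𝒜 : ι → σ)

section AddMonoid

variable [AddMonoid ι] [GradedRing 𝒜]

theorem exists_add_eq_of_coe_decompose_mul_ne_zero {a b : R} {n : ι}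
    (h : (decompose 𝒜 (a * b) n : R) ≠ 0) :
    ∃ i j, i + j = n ∧ (decompose 𝒜 a i : R) * decompose 𝒜 b j ≠ 0 := by
  classical
  rw [decompose_mul, coe_mul_apply] at h
  obtain ⟨⟨i, j⟩, hij, hne⟩ := Finset.exists_ne_zero_of_sum_ne_zero h
  exact ⟨i, j, (Finset.mem_filter.1 hij).2, hne⟩

theorem exists_add_eq_of_coe_decompose_mul_ne_zero_of_mem {a b : R} {w n : ι} (ha : a ∈ 𝒜 w)
    (h : (decompose 𝒜 (a * b) n : R) ≠ 0) :
    ∃ u, w + u = n ∧ a * decompose 𝒜 b u ≠ 0 := by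
  obtain ⟨i, u, rfl, hne⟩ := exists_add_eq_of_coe_decompose_mul_ne_zero 𝒜 h
  obtain rfl : i = w := by
    by_contra hiw
    rw [decompose_of_mem_ne 𝒜 ha (Ne.symm hiw), zero_mul] at hne
    exact hne rfl
  exact ⟨u, rfl, by rwa [decompose_of_mem_same 𝒜 ha] at hne⟩

theorem exists_max_coe_decompose_mul_ne_zero [LinearOrder ι] {f g : R} {w₀ : ι}
    (h : (decompose 𝒜 f w₀ : R) * g ≠ 0) :
    ∃ w, (decompose 𝒜 f w : R) * g ≠ 0 ∧ ∀ w', w < w' → (decompose 𝒜 f w' : R) * g = 0 := by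
  classical
  have hfin : {w | (decompose 𝒜 f w : R) * g ≠ 0}.Finite :=
    (decompose 𝒜 f).support.finite_toSet.subset fun w hw =>
      DFinsupp.mem_support_iff.2 fun h0 => hw (by rw [h0, ZeroMemClass.coe_zero, zero_mul])
  obtain ⟨w, hw, hmax⟩ := Set.exists_max_image _ id hfin ⟨w₀, h⟩
  exact ⟨w, hw, fun w' hlt => by_contra fun h' => (hmax w' h').not_gt hlt⟩

end AddMonoid

section AddLeftCancelMonoid

variable [AddLeftCancelMonoid ι] [GradedRing 𝒜]

theorem mul_coe_decompose_eq_zero_of_forall_coe_decompose_mul_eq_zero {f g : R}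
    (h : ∀ w, (decompose 𝒜 f w : R) * g = 0) (v : ι) : f * decompose 𝒜 g v = 0 := by
  classical
  rw [← sum_support_decompose 𝒜 f, Finset.sum_mul]
  refine Finset.sum_eq_zero fun w _ => ?_
  rw [← coe_decompose_mul_add_of_left_mem 𝒜 (SetLike.coe_mem _), h, decompose_zero, zero_apply,
    ZeroMemClass.coe_zero]

theorem card_support_decompose_mul_lt [∀ (i) (x : 𝒜 i), Decidable (x ≠ 0)] {a b : R} {w v : ι}
    (ha : a ∈ 𝒜 w) (hv : decompose 𝒜 b v ≠ 0) (hav : a * decompose 𝒜 b v = 0) :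
    (decompose 𝒜 (a * b)).support.card < (decompose 𝒜 b).support.card := by
  have hsub : (decompose 𝒜 (a * b)).support ⊆
      ((decompose 𝒜 b).support.erase v).image (w + ·) := by
    intro n hn
    obtain ⟨u, rfl, hu⟩ := exists_add_eq_of_coe_decompose_mul_ne_zero_of_mem 𝒜 ha
      (by simpa using DFinsupp.mem_support_iff.1 hn)
    refine Finset.mem_image_of_mem _ (Finset.mem_erase.2 ⟨?_, DFinsupp.mem_support_iff.2 ?_⟩)
    · rintro rfl
      exact hu hav
    · intro h0
      rw [h0, ZeroMemClass.coe_zero, mul_zero] at hu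
      exact hu rfl
  calc _ ≤ _ := Finset.card_le_card hsub
    _ ≤ _ := Finset.card_image_le
    _ < _ := Finset.card_erase_lt_of_mem (DFinsupp.mem_support_iff.2 hv)

end AddLeftCancelMonoid

section LinearOrder

variable [AddCancelCommMonoid ι] [LinearOrder ι] [IsOrderedCancelAddMonoid ι] [GradedRing 𝒜]

theorem coe_decompose_mul_add_eq_of_forall_lt {f g : R} {w v : ι}
    (hv : ∀ u, decompose 𝒜 g u ≠ 0 → u ≤ v)
    (hw : ∀ w', w < w' → (decompose 𝒜 f w' : R) * g = 0) :
    (decompose 𝒜 (f * g) (w + v) : R) = decompose 𝒜 f w * decompose 𝒜 g v := by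
  classical
  rw [decompose_mul, coe_mul_apply]
  refine Finset.sum_eq_single (w, v) (fun ⟨i, j⟩ hij hne => ?_) fun hwv => ?_
  · simp only [Finset.mem_filter, Finset.mem_product, DFinsupp.mem_support_iff] at hij
    obtain ⟨⟨-, hj⟩, hsum⟩ := hij
    rcases lt_trichotomy i w with hlt | rfl | hgt
    · exact absurd hsum (add_lt_add_of_lt_of_le hlt (hv j hj)).ne
    · exact (hne (by rw [add_left_cancel hsum])).elim
    · rw [← coe_decompose_mul_add_of_left_mem 𝒜 (SetLike.coe_mem _), hw i hgt, decompose_zero,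
        zero_apply, ZeroMemClass.coe_zero]
  · simp only [Finset.mem_filter, Finset.mem_product, DFinsupp.mem_support_iff, and_true,
      not_and_or, not_not] at hwv
    rcases hwv with h0 | h0 <;> simp [h0]

theorem exists_homogeneous_annihilator {κ : Type*}
    (hsc : ∀ a b : R, a * b = 0 → ∀ r : R, a * r * b = 0) (f : κ → R) (g : R) (hg : g ≠ 0)
    (hfg : ∀ i, f i * g = 0) :
    ∃ (v : ι) (h : R), h ∈ 𝒜 v ∧ h ≠ 0 ∧ ∀ i, f i * h = 0 := by
  classical
  induction hn : (decompose 𝒜 g).support.card using Nat.strong_induction_on generalizing g with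
  | _ n ih =>
  have hne : (decompose 𝒜 g).support.Nonempty := by
    rw [Finset.nonempty_iff_ne_empty, Ne, DFinsupp.support_eq_empty, ← decompose_zero 𝒜,
      (decompose 𝒜).injective.eq_iff]
    exact hg
  set v := (decompose 𝒜 g).support.max' hne
  have hv : decompose 𝒜 g v ≠ 0 := DFinsupp.mem_support_iff.1 (Finset.max'_mem _ hne)
  have hv_top : ∀ u, decompose 𝒜 g u ≠ 0 → u ≤ v :=
    fun u hu => Finset.le_max' _ u (DFinsupp.mem_support_iff.2 hu)
  by_cases hall : ∀ i w, (decompose 𝒜 (f i) w : R) * g = 0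
  · exact ⟨v, _, SetLike.coe_mem _, by simpa using hv,
      fun i => mul_coe_decompose_eq_zero_of_forall_coe_decompose_mul_eq_zero 𝒜 (hall i) v⟩
  push Not at hall
  obtain ⟨i, w₀, hw₀⟩ := hall
  obtain ⟨w, hw, hmax⟩ := exists_max_coe_decompose_mul_ne_zero 𝒜 hw₀
  have hav : (decompose 𝒜 (f i) w : R) * decompose 𝒜 g v = 0 := by
    rw [← coe_decompose_mul_add_eq_of_forall_lt 𝒜 hv_top hmax, hfg i, decompose_zero, zero_apply,
      ZeroMemClass.coe_zero]
  refine ih _ (hn ▸ card_support_decompose_mul_lt 𝒜 (SetLike.coe_mem _) hv hav) _ hw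
    (fun j => ?_) rfl
  rw [← mul_assoc]
  exact hsc _ _ (hfg j) _

end LinearOrder

end DirectSum

theorem exists_homogeneous_annihilator_of_family
    {k : ℕ} {R : Type*} [Ring R] (𝒜 : (Fin k → ℕ) → AddSubgroup R) [GradedRing 𝒜]
    (hsc : ∀ a b : R, a * b = 0 → ∀ r : R, a * r * b = 0)
    {ι : Type*} (f : ι → R)
    (g : R) (hg : g ≠ 0) (hfg : ∀ i : ι, f i * g = 0) :
    ∃ (v : Fin k → ℕ) (h : R), h ∈ 𝒜 v ∧ h ≠ 0 ∧ ∀ i : ι, f i * h = 0 := by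
  -- the same grading, indexed by `ℕ^k` with the lexicographic order
  let : GradedRing fun v : Lex (Fin k → ℕ) => 𝒜 (ofLex v) := ‹GradedRing 𝒜›
  exact DirectSum.exists_homogeneous_annihilator (fun v : Lex (Fin k → ℕ) => 𝒜 (ofLex v))
    hsc f g hg hfg
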